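/- Let K ⊆ V ⊗ k be a strictly characteristic subspace with normalized generator e of l_K. Every g ∈ O_K(V) satisfies (g ⊗ k)(l_K) = l_K; there is a unique scalar ζ_g ∈ k with (g ⊗ k)(e) = ζ_g·e; this scalar satisfies ζ_g^{p^{σ₀}+1} = 1 and (g ⊗ k)(φ^{i−1}(e)) = ζ_g^{p^{i−1}}·φ^{i−1}(e) for all 1 ≤ i ≤ 2σ₀; and the assignment g ↦ ζ_g is an injective group homomorphism from O_K(V) to the group of (p^{σ₀}+1)-th roots of unity in k. -/

import Mathlib

open TensorProduct

noncomputable section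

variable (p : ℕ) [Fact p.Prime] (k : Type) [Field k] [CharP k p] [Algebra (ZMod p) k]

/-- The `p`-power (Frobenius) map on `k` as a `ZMod p`-linear map. -/
def frobLin : k →ₗ[ZMod p] k where
  toFun a := a ^ p
  map_add' a b := add_pow_char a b p
  map_smul' c a := by
    simp only [RingHom.id_apply]
    rw [Algebra.smul_def, Algebra.smul_def, mul_pow, ← map_pow, ZMod.pow_card]

variable (V : Type) [AddCommGroup V] [Module (ZMod p) V]

/-- The Frobenius-semilinear endomorphism `φ = id_V ⊗ (λ ↦ λ^p)` of `k ⊗[𝔽_p] V`. -/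
def frobT : (k ⊗[ZMod p] V) →ₛₗ[frobenius k p] (k ⊗[ZMod p] V) where
  toFun := LinearMap.rTensor V (frobLin p k)
  map_add' := map_add _
  map_smul' c x := by
    induction x using TensorProduct.induction_on with
    | zero => simp
    | tmul a v =>
        simp [smul_tmul', frobLin, frobenius_def, mul_pow]
    | add x y hx hy => simp_all [smul_add]

variable [IsAlgClosed k]

instance : RingHomSurjective (frobenius k p) := ⟨surjective_frobenius k p⟩

/-- The base change to `k` of the bilinear form `B`. -/
abbrev bcForm (B : LinearMap.BilinForm (ZMod p) V) :
    LinearMap.BilinForm k (k ⊗[ZMod p] V) :=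
  LinearMap.BilinForm.baseChange k B

variable (σ₀ : ℕ) (B : LinearMap.BilinForm (ZMod p) V)

/-- `K ⊆ V ⊗ k` is a characteristic subspace: totally isotropic of dimension `σ₀`,
and `K + φ(K)` has dimension `σ₀ + 1`. -/
def IsCharacteristicSub (K : Submodule k (k ⊗[ZMod p] V)) : Prop :=
  (∀ x ∈ K, ∀ y ∈ K, bcForm p k V B x y = 0) ∧
  Module.finrank k K = σ₀ ∧
  Module.finrank k ↥(K ⊔ Submodule.map (frobT p k V) K) = σ₀ + 1

/-- `K` is strictly characteristic if moreover `∑ᵢ φ^i(K) = V ⊗ k`. -/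
def IsStrictlyCharacteristicSub (K : Submodule k (k ⊗[ZMod p] V)) : Prop :=
  IsCharacteristicSub p k V σ₀ B K ∧
  (⨆ i : ℕ, (Submodule.map (frobT p k V))^[i] K) = ⊤

/-- `l_K = K ∩ φ(K) ∩ ⋯ ∩ φ^{σ₀ − 1}(K)`. -/
def lK (K : Submodule k (k ⊗[ZMod p] V)) : Submodule k (k ⊗[ZMod p] V) :=
  ⨅ i : Fin σ₀, (Submodule.map (frobT p k V))^[(i : ℕ)] K

/-- The group `O_K(V)` of isometries of `(V, B)` such that `g ⊗ k` maps `K` to itself. -/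
def OK (K : Submodule k (k ⊗[ZMod p] V)) : Subgroup (V ≃ₗ[ZMod p] V) where
  carrier := {g : V ≃ₗ[ZMod p] V | (∀ x y : V, B (g x) (g y) = B x y) ∧
    Submodule.map (LinearMap.baseChange k (g : V →ₗ[ZMod p] V)) K = K}
  one_mem' := by
    refine ⟨fun x y => rfl, ?_⟩
    rw [LinearEquiv.coe_toLinearMap_one, LinearMap.baseChange_id, Submodule.map_id]
  mul_mem' := by
    rintro g h ⟨hg1, hg2⟩ ⟨hh1, hh2⟩
    refine ⟨fun x y => (hg1 (h x) (h y)).trans (hh1 x y), ?_⟩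
    have hco : ((g * h : V ≃ₗ[ZMod p] V) : V →ₗ[ZMod p] V)
        = (g : V →ₗ[ZMod p] V).comp (h : V →ₗ[ZMod p] V) := rfl
    rw [hco, LinearMap.baseChange_comp, Submodule.map_comp, hh2, hg2]
  inv_mem' := by
    rintro g ⟨hg1, hg2⟩
    constructor
    · intro x y
      have h1 : g (g⁻¹ x) = x := g.apply_symm_apply x
      have h2 : g (g⁻¹ y) = y := g.apply_symm_apply y
      have := hg1 (g⁻¹ x) (g⁻¹ y)
      rw [h1, h2] at this
      exact this.symm
    · conv_lhs => rw [← hg2]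
      rw [← Submodule.map_comp, ← LinearMap.baseChange_comp]
      have hco : ((g⁻¹ : V ≃ₗ[ZMod p] V) : V →ₗ[ZMod p] V).comp (g : V →ₗ[ZMod p] V)
          = LinearMap.id := by
        ext x
        exact g.symm_apply_apply x
      rw [hco, LinearMap.baseChange_id, Submodule.map_id]

end


section Aux

open LinearMap

variable (p : ℕ) [Fact p.Prime] (k : Type) [Field k] [CharP k p] [Algebra (ZMod p) k]
  (V : Type) [AddCommGroup V] [Module (ZMod p) V]

lemma ft_tmul (a : k) (v : V) : frobT p k V (a ⊗ₜ v) = (a ^ p) ⊗ₜ v := rfl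

lemma ft_smul (c : k) (x : k ⊗[ZMod p] V) :
    frobT p k V (c • x) = c ^ p • frobT p k V x := by
  rw [map_smulₛₗ]; rfl

lemma ft_iter_smul (n : ℕ) (c : k) (x : k ⊗[ZMod p] V) :
    (⇑(frobT p k V))^[n] (c • x) = c ^ p ^ n • (⇑(frobT p k V))^[n] x := by
  induction n with
  | zero => simp
  | succ n ih =>
      rw [Function.iterate_succ_apply', Function.iterate_succ_apply', ih, ft_smul,
        ← pow_mul, ← pow_succ]

lemma ft_comm (g : V →ₗ[ZMod p] V) (x : k ⊗[ZMod p] V) :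
    frobT p k V (LinearMap.baseChange k g x) = LinearMap.baseChange k g (frobT p k V x) := by
  induction x using TensorProduct.induction_on with
  | zero => simp
  | tmul a v => simp [ft_tmul]
  | add x y hx hy => simp only [map_add, hx, hy]

lemma ft_iter_comm (g : V →ₗ[ZMod p] V) (n : ℕ) (x : k ⊗[ZMod p] V) :
    (⇑(frobT p k V))^[n] (LinearMap.baseChange k g x)
      = LinearMap.baseChange k g ((⇑(frobT p k V))^[n] x) := by
  induction n with
  | zero => rfl
  | succ n ih => rw [Function.iterate_succ_apply', Function.iterate_succ_apply', ih, ft_comm]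

variable (B : LinearMap.BilinForm (ZMod p) V)

lemma form_frob (x y : k ⊗[ZMod p] V) :
    bcForm p k V B (frobT p k V x) (frobT p k V y) = (bcForm p k V B x y) ^ p := by
  have hp : p ≠ 0 := (Fact.out : p.Prime).ne_zero
  induction x using TensorProduct.induction_on with
  | zero => simp [zero_pow hp]
  | add x x' hx hx' =>
      simp only [map_add, LinearMap.add_apply, hx, hx', add_pow_char]
  | tmul a v =>
      induction y using TensorProduct.induction_on with
      | zero => simp [zero_pow hp]
      | add y y' hy hy' => rw [map_add, map_add, map_add, hy, hy', add_pow_char]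
      | tmul b w =>
          rw [ft_tmul, ft_tmul, LinearMap.BilinForm.baseChange_tmul,
            LinearMap.BilinForm.baseChange_tmul, Algebra.smul_def, Algebra.smul_def,
            mul_pow, ← map_pow, ZMod.pow_card, mul_pow]

lemma form_frob_iter (n : ℕ) (x y : k ⊗[ZMod p] V) :
    bcForm p k V B ((⇑(frobT p k V))^[n] x) ((⇑(frobT p k V))^[n] y)
      = (bcForm p k V B x y) ^ p ^ n := by
  induction n with
  | zero => simp
  | succ n ih =>
      rw [Function.iterate_succ_apply', Function.iterate_succ_apply', form_frob, ih,
        ← pow_mul, ← pow_succ]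

lemma form_isom (g : V →ₗ[ZMod p] V) (hg : ∀ x y : V, B (g x) (g y) = B x y)
    (x y : k ⊗[ZMod p] V) :
    bcForm p k V B (LinearMap.baseChange k g x) (LinearMap.baseChange k g y)
      = bcForm p k V B x y := by
  induction x using TensorProduct.induction_on with
  | zero => simp
  | add x x' hx hx' =>
      simp only [map_add, LinearMap.add_apply, hx, hx']
  | tmul a v =>
      induction y using TensorProduct.induction_on with
      | zero => simp
      | add y y' hy hy' => rw [map_add, map_add, map_add, hy, hy']
      | tmul b w =>
          rw [LinearMap.baseChange_tmul, LinearMap.baseChange_tmul,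
            LinearMap.BilinForm.baseChange_tmul, LinearMap.BilinForm.baseChange_tmul, hg]

lemma form_symm (hsymm : B.IsSymm) (x y : k ⊗[ZMod p] V) :
    bcForm p k V B x y = bcForm p k V B y x := by
  have := (LinearMap.BilinForm.IsSymm.baseChange k (LinearMap.BilinForm.isSymm_iff.mp hsymm)).eq x y
  simpa using this

variable [IsAlgClosed k]

lemma iter_map_mem (K : Submodule k (k ⊗[ZMod p] V)) (n : ℕ) {y : k ⊗[ZMod p] V}
    (hy : y ∈ K) : (⇑(frobT p k V))^[n] y ∈ (Submodule.map (frobT p k V))^[n] K := by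
  induction n with
  | zero => exact hy
  | succ n ih =>
      rw [Function.iterate_succ_apply' (Submodule.map (frobT p k V)),
        Function.iterate_succ_apply']
      exact Submodule.mem_map_of_mem ih

lemma mem_iter_map (K : Submodule k (k ⊗[ZMod p] V)) (n : ℕ) {x : k ⊗[ZMod p] V}
    (hx : x ∈ (Submodule.map (frobT p k V))^[n] K) :
    ∃ y ∈ K, (⇑(frobT p k V))^[n] y = x := by
  induction n generalizing x with
  | zero => exact ⟨x, hx, rfl⟩
  | succ n ih =>
      rw [Function.iterate_succ_apply' (Submodule.map (frobT p k V))] at hx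
      obtain ⟨z, hz, hzx⟩ := Submodule.mem_map.mp hx
      obtain ⟨y, hy, hyz⟩ := ih hz
      exact ⟨y, hy, by rw [Function.iterate_succ_apply', hyz, hzx]⟩

lemma map_bc_iter (g : V →ₗ[ZMod p] V) (K : Submodule k (k ⊗[ZMod p] V)) (n : ℕ) :
    Submodule.map (LinearMap.baseChange k g) ((Submodule.map (frobT p k V))^[n] K)
      = (Submodule.map (frobT p k V))^[n] (Submodule.map (LinearMap.baseChange k g) K) := by
  induction n with
  | zero => rfl
  | succ n ih =>
      rw [Function.iterate_succ_apply' (Submodule.map (frobT p k V)),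
        Function.iterate_succ_apply' (Submodule.map (frobT p k V)), ← ih]
      ext x
      simp only [Submodule.mem_map]
      constructor
      · rintro ⟨y, ⟨z, hz, rfl⟩, rfl⟩
        exact ⟨LinearMap.baseChange k g z, ⟨z, hz, rfl⟩, ft_comm p k V g z⟩
      · rintro ⟨y, ⟨z, hz, rfl⟩, rfl⟩
        exact ⟨frobT p k V z, ⟨z, hz, rfl⟩, (ft_comm p k V g z).symm⟩

end Aux

/-- the eigenvalue character of `O_K(V)` on the normalized generator of
`l_K` is an injective homomorphism into the `(p^σ₀ + 1)`-th roots of unity. -/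
theorem statement5
    (p : ℕ) [Fact p.Prime] (hodd : Odd p)
    (k : Type) [Field k] [CharP k p] [Algebra (ZMod p) k] [IsAlgClosed k]
    (V : Type) [AddCommGroup V] [Module (ZMod p) V]
    (σ₀ : ℕ) (hσ : 1 ≤ σ₀)
    (hdim : Module.finrank (ZMod p) V = 2 * σ₀)
    (B : LinearMap.BilinForm (ZMod p) V)
    (hsymm : B.IsSymm) (hnd : B.Nondegenerate)
    (hnn : ∀ W : Submodule (ZMod p) V,
      (∀ x ∈ W, ∀ y ∈ W, B x y = 0) → Module.finrank (ZMod p) W ≠ σ₀)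
    (K : Submodule k (k ⊗[ZMod p] V))
    (hK : IsStrictlyCharacteristicSub p k V σ₀ B K)
    (e : k ⊗[ZMod p] V)
    (hgen : Submodule.span k {e} = lK p k V σ₀ K)
    (hnorm : bcForm p k V B e ((⇑(frobT p k V))^[σ₀] e) = 1)
    :
    (∀ g ∈ OK p k V B K,
      Submodule.map (LinearMap.baseChange k (g : V →ₗ[ZMod p] V)) (lK p k V σ₀ K)
        = lK p k V σ₀ K) ∧
    (∀ g ∈ OK p k V B K,
      ∃! ζ : k, LinearMap.baseChange k (g : V →ₗ[ZMod p] V) e = ζ • e) ∧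
    (∀ ζf : (OK p k V B K) → k,
      (∀ g : OK p k V B K,
        LinearMap.baseChange k ((g : V ≃ₗ[ZMod p] V) : V →ₗ[ZMod p] V) e = ζf g • e) →
      ((∀ g : OK p k V B K, ζf g ^ (p ^ σ₀ + 1) = 1) ∧
       (∀ (g : OK p k V B K) (i : ℕ), 1 ≤ i → i ≤ 2 * σ₀ →
         LinearMap.baseChange k ((g : V ≃ₗ[ZMod p] V) : V →ₗ[ZMod p] V)
             ((⇑(frobT p k V))^[i - 1] e)
           = ζf g ^ p ^ (i - 1) • (⇑(frobT p k V))^[i - 1] e) ∧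
       (∀ g h : OK p k V B K, ζf (g * h) = ζf g * ζf h) ∧
       Function.Injective ζf)) := by
  classical
  obtain ⟨⟨hiso, hdimK, hdim1⟩, hsup⟩ := hK
  have hpne : p ≠ 0 := (Fact.out : p.Prime).ne_zero
  -- basic facts about e
  have hene : e ≠ 0 := by
    intro h
    rw [h] at hnorm
    simp at hnorm
  have he_lK : e ∈ lK p k V σ₀ K := hgen ▸ Submodule.mem_span_singleton_self e
  have he_iter : ∀ d : ℕ, d < σ₀ → e ∈ (Submodule.map (frobT p k V))^[d] K := by
    intro d hd
    exact (iInf_le (fun i : Fin σ₀ => (Submodule.map (frobT p k V))^[(i : ℕ)] K) ⟨d, hd⟩) he_lK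
  have heK : e ∈ K := he_iter 0 hσ
  -- orthogonality relations
  have orth0 : ∀ d : ℕ, d < σ₀ → bcForm p k V B e ((⇑(frobT p k V))^[d] e) = 0 := by
    intro d hd
    obtain ⟨y, hy, hye⟩ := mem_iter_map p k V K d (he_iter d hd)
    calc bcForm p k V B e ((⇑(frobT p k V))^[d] e)
        = bcForm p k V B ((⇑(frobT p k V))^[d] y) ((⇑(frobT p k V))^[d] e) := by rw [hye]
      _ = (bcForm p k V B y e) ^ p ^ d := form_frob_iter p k V B d y e
      _ = 0 := by rw [hiso y hy e heK, zero_pow (pow_ne_zero d hpne)]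
  have orth_le : ∀ a b : ℕ, a ≤ b → b - a < σ₀ →
      bcForm p k V B ((⇑(frobT p k V))^[a] e) ((⇑(frobT p k V))^[b] e) = 0 := by
    intro a b hab hba
    have hb : (⇑(frobT p k V))^[b] e = (⇑(frobT p k V))^[a] ((⇑(frobT p k V))^[b - a] e) := by
      rw [← Function.iterate_add_apply, Nat.add_sub_cancel' hab]
    rw [hb, form_frob_iter, orth0 _ hba, zero_pow (pow_ne_zero a hpne)]
  have orth : ∀ a b : ℕ, a < b + σ₀ → b < a + σ₀ →
      bcForm p k V B ((⇑(frobT p k V))^[a] e) ((⇑(frobT p k V))^[b] e) = 0 := by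
    intro a b h1 h2
    rcases le_total a b with h | h
    · exact orth_le a b h (by omega)
    · rw [form_symm p k V B hsymm]
      exact orth_le b a h (by omega)
  have norm1 : ∀ a : ℕ,
      bcForm p k V B ((⇑(frobT p k V))^[a] e) ((⇑(frobT p k V))^[a + σ₀] e) = 1 := by
    intro a
    rw [Function.iterate_add_apply, form_frob_iter, hnorm, one_pow]
  -- linear independence of e, φe, ..., φ^(2σ₀-1) e
  have hind : LinearIndependent k (fun i : Fin (2 * σ₀) => (⇑(frobT p k V))^[(i : ℕ)] e) := by
    rw [Fintype.linearIndependent_iff]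
    intro c hsum
    have key : ∀ j : ℕ,
        (∑ i : Fin (2 * σ₀),
          c i * bcForm p k V B ((⇑(frobT p k V))^[(i : ℕ)] e) ((⇑(frobT p k V))^[j] e)) = 0 := by
      intro j
      have h0 := congrArg (fun x => bcForm p k V B x ((⇑(frobT p k V))^[j] e)) hsum
      simpa [map_sum, map_smul, LinearMap.sum_apply, LinearMap.smul_apply, smul_eq_mul]
        using h0
    have top : ∀ t : ℕ, t ≤ σ₀ → ∀ i : Fin (2 * σ₀), 2 * σ₀ - t ≤ (i : ℕ) → c i = 0 := by
      intro t
      induction t with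
      | zero => exact fun _ i hi => absurd i.isLt (by omega)
      | succ t ih =>
          intro ht i hi
          by_cases hit : 2 * σ₀ - t ≤ (i : ℕ)
          · exact ih (by omega) i hit
          have hne' : ∀ b : Fin (2 * σ₀), b ≠ i → (b : ℕ) ≠ (i : ℕ) :=
            fun b hb h => hb (Fin.ext h)
          have hieq : (i : ℕ) = (σ₀ - 1 - t) + σ₀ := by omega
          have hk := key (σ₀ - 1 - t)
          rw [Finset.sum_eq_single i ?h1 ?h2] at hk
          case h1 =>
            intro b _ hbi
            by_cases hb : 2 * σ₀ - t ≤ (b : ℕ)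
            · rw [ih (by omega) b hb, zero_mul]
            · have hblt : (b : ℕ) < (i : ℕ) := by
                have := hne' b hbi
                omega
              rw [orth (b : ℕ) (σ₀ - 1 - t) (by omega) (by omega), mul_zero]
          case h2 => exact fun h => absurd (Finset.mem_univ i) h
          have h1 : bcForm p k V B ((⇑(frobT p k V))^[(i : ℕ)] e)
              ((⇑(frobT p k V))^[σ₀ - 1 - t] e) = 1 := by
            rw [form_symm p k V B hsymm, hieq]
            exact norm1 _
          rw [h1, mul_one] at hk
          exact hk
    have bot : ∀ t : ℕ, t ≤ σ₀ → ∀ i : Fin (2 * σ₀), (i : ℕ) < t → c i = 0 := by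
      intro t
      induction t with
      | zero => exact fun _ i hi => absurd hi (by omega)
      | succ t ih =>
          intro ht i hi
          by_cases hit : (i : ℕ) < t
          · exact ih (by omega) i hit
          have hne' : ∀ b : Fin (2 * σ₀), b ≠ i → (b : ℕ) ≠ (i : ℕ) :=
            fun b hb h => hb (Fin.ext h)
          have hieq : (i : ℕ) = t := by omega
          have hk := key (σ₀ + t)
          rw [Finset.sum_eq_single i ?h3 ?h4] at hk
          case h3 =>
            intro b _ hbi
            by_cases hb : (b : ℕ) < t
            · rw [ih (by omega) b hb, zero_mul]
            · have hblt : t < (b : ℕ) := by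
                have := hne' b hbi
                omega
              rw [orth (b : ℕ) (σ₀ + t) (by omega) (by omega), mul_zero]
          case h4 => exact fun h => absurd (Finset.mem_univ i) h
          have h1 : bcForm p k V B ((⇑(frobT p k V))^[(i : ℕ)] e)
              ((⇑(frobT p k V))^[σ₀ + t] e) = 1 := by
            rw [hieq, Nat.add_comm σ₀ t]
            exact norm1 t
          rw [h1, mul_one] at hk
          exact hk
    intro i
    rcases lt_or_ge (i : ℕ) σ₀ with h | h
    · exact bot σ₀ le_rfl i h
    · exact top σ₀ le_rfl i (by omega)
  have hspan : Submodule.span k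
      (Set.range (fun i : Fin (2 * σ₀) => (⇑(frobT p k V))^[(i : ℕ)] e)) = ⊤ := by
    have : Nonempty (Fin (2 * σ₀)) := ⟨⟨0, by omega⟩⟩
    refine hind.span_eq_top_of_card_eq_finrank ?_
    rw [Fintype.card_fin, Module.finrank_baseChange, hdim]
  -- membership in OK unfolded
  have hOK : ∀ g : V ≃ₗ[ZMod p] V, g ∈ OK p k V B K ↔
      ((∀ x y : V, B (g x) (g y) = B x y) ∧
        Submodule.map (LinearMap.baseChange k (g : V →ₗ[ZMod p] V)) K = K) := fun g => Iff.rfl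
  -- bullet 1
  have maplK_le : ∀ g : V →ₗ[ZMod p] V,
      Submodule.map (LinearMap.baseChange k g) K = K →
      Submodule.map (LinearMap.baseChange k g) (lK p k V σ₀ K) ≤ lK p k V σ₀ K := by
    intro g hg
    refine le_iInf fun i => ?_
    calc Submodule.map (LinearMap.baseChange k g) (lK p k V σ₀ K)
        ≤ Submodule.map (LinearMap.baseChange k g)
            ((Submodule.map (frobT p k V))^[(i : ℕ)] K) :=
          Submodule.map_mono (iInf_le _ i)
      _ = (Submodule.map (frobT p k V))^[(i : ℕ)]
            (Submodule.map (LinearMap.baseChange k g) K) := map_bc_iter p k V g K (i : ℕ)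
      _ = (Submodule.map (frobT p k V))^[(i : ℕ)] K := by rw [hg]
  have bullet1 : ∀ g ∈ OK p k V B K,
      Submodule.map (LinearMap.baseChange k (g : V →ₗ[ZMod p] V)) (lK p k V σ₀ K)
        = lK p k V σ₀ K := by
    intro g hg
    obtain ⟨hg1, hg2⟩ := (hOK g).mp hg
    obtain ⟨hg1', hg2'⟩ := (hOK g⁻¹).mp ((OK p k V B K).inv_mem hg)
    refine le_antisymm (maplK_le _ hg2) ?_
    have hcomp : Submodule.map (LinearMap.baseChange k (g : V →ₗ[ZMod p] V))
        (Submodule.map (LinearMap.baseChange k ((g⁻¹ : V ≃ₗ[ZMod p] V) : V →ₗ[ZMod p] V))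
          (lK p k V σ₀ K)) = lK p k V σ₀ K := by
      rw [← Submodule.map_comp, ← LinearMap.baseChange_comp]
      have hco : (g : V →ₗ[ZMod p] V).comp ((g⁻¹ : V ≃ₗ[ZMod p] V) : V →ₗ[ZMod p] V)
          = LinearMap.id := by
        ext x
        exact g.apply_symm_apply x
      rw [hco, LinearMap.baseChange_id, Submodule.map_id]
    calc lK p k V σ₀ K = _ := hcomp.symm
      _ ≤ Submodule.map (LinearMap.baseChange k (g : V →ₗ[ZMod p] V)) (lK p k V σ₀ K) :=
          Submodule.map_mono (maplK_le _ hg2')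
  -- cancellation
  have hcancel : ∀ a b : k, a • e = b • e → a = b := by
    intro a b hab
    have h0 : (a - b) • e = 0 := by rw [sub_smul a b e, hab, sub_self]
    rcases smul_eq_zero.mp h0 with h | h
    · exact sub_eq_zero.mp h
    · exact absurd h hene
  -- bullet 2
  have bullet2 : ∀ g ∈ OK p k V B K,
      ∃! ζ : k, LinearMap.baseChange k (g : V →ₗ[ZMod p] V) e = ζ • e := by
    intro g hg
    have hmem : LinearMap.baseChange k (g : V →ₗ[ZMod p] V) e ∈ Submodule.span k {e} := by
      rw [hgen, ← bullet1 g hg]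
      exact Submodule.mem_map_of_mem he_lK
    obtain ⟨a, ha⟩ := Submodule.mem_span_singleton.mp hmem
    exact ⟨a, ha.symm, fun b hb => hcancel b a (hb.symm.trans ha.symm)⟩
  refine ⟨bullet1, bullet2, ?_⟩
  intro ζf hζf
  -- eigenvalues on iterates
  have hiter : ∀ (g : OK p k V B K) (m : ℕ),
      LinearMap.baseChange k ((g : V ≃ₗ[ZMod p] V) : V →ₗ[ZMod p] V)
          ((⇑(frobT p k V))^[m] e)
        = ζf g ^ p ^ m • (⇑(frobT p k V))^[m] e := by
    intro g m
    calc LinearMap.baseChange k ((g : V ≃ₗ[ZMod p] V) : V →ₗ[ZMod p] V)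
          ((⇑(frobT p k V))^[m] e)
        = (⇑(frobT p k V))^[m]
            (LinearMap.baseChange k ((g : V ≃ₗ[ZMod p] V) : V →ₗ[ZMod p] V) e) :=
          (ft_iter_comm p k V _ m e).symm
      _ = (⇑(frobT p k V))^[m] (ζf g • e) := by rw [hζf g]
      _ = ζf g ^ p ^ m • (⇑(frobT p k V))^[m] e := ft_iter_smul p k V m _ e
  -- roots of unity
  have hpow : ∀ g : OK p k V B K, ζf g ^ (p ^ σ₀ + 1) = 1 := by
    intro g
    obtain ⟨hg1, hg2⟩ := (hOK (g : V ≃ₗ[ZMod p] V)).mp g.2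
    have hiso' := form_isom p k V B ((g : V ≃ₗ[ZMod p] V) : V →ₗ[ZMod p] V) hg1 e
      ((⇑(frobT p k V))^[σ₀] e)
    rw [hζf g, hiter g σ₀] at hiso'
    simp only [map_smul, LinearMap.smul_apply, smul_eq_mul, hnorm, mul_one] at hiso'
    rw [pow_add, pow_one]
    exact hiso'
  -- multiplicativity
  have hmul : ∀ g h : OK p k V B K, ζf (g * h) = ζf g * ζf h := by
    intro g h
    have hco : (((g * h : OK p k V B K) : V ≃ₗ[ZMod p] V) : V →ₗ[ZMod p] V)
        = ((g : V ≃ₗ[ZMod p] V) : V →ₗ[ZMod p] V).comp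
            ((h : V ≃ₗ[ZMod p] V) : V →ₗ[ZMod p] V) := rfl
    have h1 := hζf (g * h)
    rw [hco, LinearMap.baseChange_comp, LinearMap.comp_apply, hζf h, map_smul, hζf g,
      smul_smul, mul_comm (ζf h)] at h1
    exact (hcancel _ _ h1).symm
  have hone : ζf 1 = 1 := by
    have h1 := hζf 1
    have hid : (((1 : OK p k V B K) : V ≃ₗ[ZMod p] V) : V →ₗ[ZMod p] V) = LinearMap.id := rfl
    rw [hid, LinearMap.baseChange_id, LinearMap.id_apply] at h1
    have h2 : (1 : k) • e = ζf 1 • e := by rw [one_smul]; exact h1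
    exact (hcancel _ _ h2).symm
  -- injectivity of v ↦ 1 ⊗ v
  have hinjV : Function.Injective (fun v : V => (1 : k) ⊗ₜ[ZMod p] v) := by
    have h1 : Function.Injective (Algebra.linearMap (ZMod p) k) :=
      fun a b hab => (algebraMap (ZMod p) k).injective hab
    have h2 := Module.Flat.rTensor_preserves_injective_linearMap (M := V)
      (Algebra.linearMap (ZMod p) k) h1
    intro a b hab
    have h3 : (LinearMap.rTensor V (Algebra.linearMap (ZMod p) k)) ((1 : ZMod p) ⊗ₜ a)
        = (LinearMap.rTensor V (Algebra.linearMap (ZMod p) k)) ((1 : ZMod p) ⊗ₜ b) := by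
      simpa [LinearMap.rTensor_tmul] using hab
    have h4 := h2 h3
    have h5 := congrArg (TensorProduct.lid (ZMod p) V) h4
    simpa using h5
  refine ⟨hpow, ?_, hmul, ?_⟩
  · intro g i hi1 hi2
    exact hiter g (i - 1)
  · intro g h hgh
    have hu : ζf (g * h⁻¹) = 1 := by
      rw [hmul, hgh, ← hmul, mul_inv_cancel, hone]
    have hue : LinearMap.baseChange k
        (((g * h⁻¹ : OK p k V B K) : V ≃ₗ[ZMod p] V) : V →ₗ[ZMod p] V) e = e := by
      rw [hζf (g * h⁻¹), hu, one_smul]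
    have huiter : ∀ m : ℕ, LinearMap.baseChange k
        (((g * h⁻¹ : OK p k V B K) : V ≃ₗ[ZMod p] V) : V →ₗ[ZMod p] V)
          ((⇑(frobT p k V))^[m] e) = (⇑(frobT p k V))^[m] e := by
      intro m
      calc LinearMap.baseChange k
            (((g * h⁻¹ : OK p k V B K) : V ≃ₗ[ZMod p] V) : V →ₗ[ZMod p] V)
              ((⇑(frobT p k V))^[m] e)
          = (⇑(frobT p k V))^[m] (LinearMap.baseChange k
              (((g * h⁻¹ : OK p k V B K) : V ≃ₗ[ZMod p] V) : V →ₗ[ZMod p] V) e) :=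
            (ft_iter_comm p k V _ m e).symm
        _ = (⇑(frobT p k V))^[m] e := by rw [hue]
    have htop : ∀ x : k ⊗[ZMod p] V, LinearMap.baseChange k
        (((g * h⁻¹ : OK p k V B K) : V ≃ₗ[ZMod p] V) : V →ₗ[ZMod p] V) x = x := by
      have hle : Submodule.span k
          (Set.range (fun i : Fin (2 * σ₀) => (⇑(frobT p k V))^[(i : ℕ)] e))
          ≤ LinearMap.eqLocus (LinearMap.baseChange k
              (((g * h⁻¹ : OK p k V B K) : V ≃ₗ[ZMod p] V) : V →ₗ[ZMod p] V))
              LinearMap.id := by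
        rw [Submodule.span_le]
        rintro x ⟨i, rfl⟩
        exact LinearMap.mem_eqLocus.mpr (huiter (i : ℕ))
      rw [hspan] at hle
      intro x
      exact LinearMap.mem_eqLocus.mp (hle Submodule.mem_top)
    have huV : ∀ w : V, ((g * h⁻¹ : OK p k V B K) : V ≃ₗ[ZMod p] V) w = w := by
      intro w
      have hw := htop ((1 : k) ⊗ₜ w)
      rw [LinearMap.baseChange_tmul] at hw
      exact hinjV hw
    have hu1 : ((g * h⁻¹ : OK p k V B K) : V ≃ₗ[ZMod p] V) = 1 := LinearEquiv.ext huV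
    have hgh1 : (g * h⁻¹ : OK p k V B K) = 1 := Subtype.ext hu1
    exact mul_inv_eq_one.mp hgh1
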